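/- Let d ≥ 2, s ∈ (0,1), μ > 0, 2μ + λ > 0, and let α ∈ (2s, 1]. Let u : ℝ^d → ℝ^d be bounded and α-Hölder continuous with Hölder constant K (that is, |u(x)−u(y)| ≤ K|x−y|^α for all x, y). Then for every x the two integrals in the second-order-difference definition of 𝕃^s u(x) converge absolutely, and there exists a constant C depending only on d, s, α, μ, λ such that |𝕃^s u(x) − 𝕃^s u(x')| ≤ C K |x−x'|^{α−2s} for all x, x' ∈ ℝ^d; i.e., 𝕃^s u is (α−2s)-Hölder continuous with constant C K. -/

import Mathlib

/-!
Both integrands are `Φ h (δ²u(x, h))` with `δ²u(x, h) = 2u(x) − u(x+h) − u(x−h)` and an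
operator-valued kernel `‖Φ h‖ ≤ |h|^{-(d+2s)}`. Hölder continuity gives `|δ²u(x, h)| ≤ 2K|h|^α`,
boundedness gives `|δ²u(x, h)| ≤ 4M`, so the integrals converge near `0` (as `α > 2s`) and at
infinity. For the Hölder estimate split at `r = |x − x'|`: on `|h| < r` bound the two integrands
separately by `2K|h|^{α−d−2s}` each, on `|h| ≥ r` use `|δ²u(x, h) − δ²u(x', h)| ≤ 4K r^α`.
In polar coordinates both pieces are multiples of `r^{α−2s}`.
-/

open Real MeasureTheory
open scoped RealInnerProductSpace

noncomputable section

/-- `c_{d,s} = 2^{2s} s Γ(d/2+s)/(π^{d/2} Γ(1−s))`. -/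
def cConst (d : ℕ) (s : ℝ) : ℝ :=
  (2 : ℝ) ^ (2 * s) * s * Real.Gamma ((d : ℝ) / 2 + s) /
    (π ^ ((d : ℝ) / 2) * Real.Gamma (1 - s))

/-- `κ_{d,s} = (d+2s) c_{d,s}`. -/
def kappaConst (d : ℕ) (s : ℝ) : ℝ := ((d : ℝ) + 2 * s) * cConst d s

/-- The fractional Lamé–Navier operator `𝕃^s u` (second-order-difference form) of a
bare vector field. -/
def lameFracFn (d : ℕ) (s μ lam : ℝ)
    (u : EuclideanSpace ℝ (Fin d) → EuclideanSpace ℝ (Fin d))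
    (x : EuclideanSpace ℝ (Fin d)) : EuclideanSpace ℝ (Fin d) :=
  (((2 * s + 1) * μ ^ s - (2 * μ + lam) ^ s) / (2 * s) * (cConst d s / 2)) •
      (∫ h : EuclideanSpace ℝ (Fin d),
        (‖h‖ ^ ((d : ℝ) + 2 * s))⁻¹ • ((2 : ℝ) • u x - u (x + h) - u (x - h))) +
    (((2 * μ + lam) ^ s - μ ^ s) / (2 * s) * (kappaConst d s / 2)) •
      (∫ h : EuclideanSpace ℝ (Fin d),
        (⟪h, (2 : ℝ) • u x - u (x + h) - u (x - h)⟫ /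
          (‖h‖ ^ 2 * ‖h‖ ^ ((d : ℝ) + 2 * s))) • h)

open Set Metric Module

lemma pow_pred_mul_rpow {n : ℕ} (hn : 1 ≤ n) {y : ℝ} (hy : 0 < y) (β : ℝ) :
    y ^ (n - 1) * y ^ β = y ^ ((n : ℝ) + β - 1) := by
  rw [← rpow_natCast, ← rpow_add hy, Nat.cast_sub hn, Nat.cast_one]
  ring_nf

section RadialIntegral

variable {E F : Type*} [NormedAddCommGroup E] [NormedSpace ℝ E] [FiniteDimensional ℝ E]
  [MeasurableSpace E] [BorelSpace E] [Nontrivial E] (μ : Measure E) [μ.IsAddHaarMeasure]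
  [NormedAddCommGroup F] [NormedSpace ℝ F]

lemma setIntegral_ball_fun_norm_addHaar (f : ℝ → F) (r : ℝ) :
    ∫ x in ball (0 : E) r, f ‖x‖ ∂μ =
      finrank ℝ E • μ.real (ball 0 1) • ∫ y in Ioo 0 r, y ^ (finrank ℝ E - 1) • f y := by
  have hind : (ball (0 : E) r).indicator (fun x => f ‖x‖) = fun x => (Iio r).indicator f ‖x‖ := by
    ext x; simp [indicator]
  rw [← integral_indicator measurableSet_ball, hind, integral_fun_norm_addHaar]
  simp_rw [← indicator_smul, setIntegral_indicator measurableSet_Iio, Ioi_inter_Iio]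

lemma setIntegral_compl_ball_fun_norm_addHaar (f : ℝ → F) {r : ℝ} (hr : 0 < r) :
    ∫ x in (ball (0 : E) r)ᶜ, f ‖x‖ ∂μ =
      finrank ℝ E • μ.real (ball 0 1) • ∫ y in Ioi r, y ^ (finrank ℝ E - 1) • f y := by
  have hind : (ball (0 : E) r)ᶜ.indicator (fun x => f ‖x‖) =
      fun x => (Ici r).indicator f ‖x‖ := by
    ext x; simp [indicator]
  rw [← integral_indicator measurableSet_ball.compl, hind, integral_fun_norm_addHaar]
  simp_rw [← indicator_smul, setIntegral_indicator measurableSet_Ici,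
    inter_eq_right.2 (Ici_subset_Ioi.2 hr), integral_Ici_eq_integral_Ioi]

lemma integrableOn_compl_ball_fun_norm_addHaar {f : ℝ → F} {r : ℝ} (hr : 0 < r) :
    IntegrableOn (fun x : E => f ‖x‖) (ball 0 r)ᶜ μ ↔
      IntegrableOn (fun y => y ^ (finrank ℝ E - 1) • f y) (Ioi r) := by
  have hind : (ball (0 : E) r)ᶜ.indicator (fun x => f ‖x‖) =
      fun x => (Ici r).indicator f ‖x‖ := by
    ext x; simp [indicator]
  rw [← integrable_indicator_iff measurableSet_ball.compl, hind, integrable_fun_norm_addHaar]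
  simp_rw [← indicator_smul]
  rw [IntegrableOn, integrable_indicator_iff measurableSet_Ici, IntegrableOn,
    Measure.restrict_restrict measurableSet_Ici, inter_eq_left.2 (Ici_subset_Ioi.2 hr)]
  exact integrableOn_Ici_iff_integrableOn_Ioi

lemma setIntegral_ball_norm_rpow {β : ℝ} (hβ : -(finrank ℝ E : ℝ) < β) {r : ℝ} (hr : 0 ≤ r) :
    ∫ x in ball (0 : E) r, ‖x‖ ^ β ∂μ =
      finrank ℝ E * μ.real (ball 0 1) / (finrank ℝ E + β) * r ^ ((finrank ℝ E : ℝ) + β) := by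
  have hn : 1 ≤ finrank ℝ E := finrank_pos
  rw [setIntegral_ball_fun_norm_addHaar μ (fun y => y ^ β)]
  simp_rw [smul_eq_mul]
  rw [setIntegral_congr_fun measurableSet_Ioo fun y hy => pow_pred_mul_rpow hn hy.1 β,
    ← integral_Ioc_eq_integral_Ioo, ← intervalIntegral.integral_of_le hr,
    integral_rpow (Or.inl (by linarith)), sub_add_cancel, zero_rpow (by linarith),
    nsmul_eq_mul]
  ring

lemma setIntegral_compl_ball_norm_rpow {γ : ℝ} (hγ : γ < -(finrank ℝ E : ℝ)) {r : ℝ}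
    (hr : 0 < r) :
    ∫ x in (ball (0 : E) r)ᶜ, ‖x‖ ^ γ ∂μ =
      finrank ℝ E * μ.real (ball 0 1) / (-(finrank ℝ E + γ)) * r ^ ((finrank ℝ E : ℝ) + γ) := by
  have hn : 1 ≤ finrank ℝ E := finrank_pos
  rw [setIntegral_compl_ball_fun_norm_addHaar μ (fun y => y ^ γ) hr]
  simp_rw [smul_eq_mul]
  rw [setIntegral_congr_fun measurableSet_Ioi fun y hy => pow_pred_mul_rpow hn (hr.trans hy) γ,
    integral_Ioi_rpow_of_lt (by linarith) hr, sub_add_cancel, nsmul_eq_mul, div_neg]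
  ring

lemma integrableOn_ball_norm_rpow {β : ℝ} (hβ : -(finrank ℝ E : ℝ) < β) (r : ℝ) :
    IntegrableOn (fun x : E => ‖x‖ ^ β) (ball 0 r) μ :=
  integrableOn_ball_of_norm_le_rpow finrank_pos (C := 1) (neg_lt.1 hβ)
    (.of_forall fun x => by simp [abs_of_nonneg (rpow_nonneg (norm_nonneg x) β)])
    (measurable_norm.pow_const β).aestronglyMeasurable

lemma integrableOn_compl_ball_norm_rpow {γ : ℝ} (hγ : γ < -(finrank ℝ E : ℝ)) {r : ℝ}
    (hr : 0 < r) :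
    IntegrableOn (fun x : E => ‖x‖ ^ γ) (ball 0 r)ᶜ μ := by
  have hn : 1 ≤ finrank ℝ E := finrank_pos
  rw [integrableOn_compl_ball_fun_norm_addHaar μ (f := fun y => y ^ γ) hr]
  simp_rw [smul_eq_mul]
  refine (integrableOn_Ioi_rpow_of_lt (by linarith) hr).congr_fun
    (fun y hy => (pow_pred_mul_rpow hn (hr.trans hy) γ).symm) measurableSet_Ioi

variable {μ} {H : Type*} [NormedAddCommGroup H] {G : E → H} {a b β γ r : ℝ}

lemma integrable_of_norm_le_rpow_split (hG : AEStronglyMeasurable G μ)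
    (hβ : -(finrank ℝ E : ℝ) < β) (hγ : γ < -(finrank ℝ E : ℝ)) (hr : 0 < r)
    (hnear : ∀ x ∈ ball (0 : E) r, ‖G x‖ ≤ a * ‖x‖ ^ β)
    (hfar : ∀ x ∈ (ball (0 : E) r)ᶜ, ‖G x‖ ≤ b * ‖x‖ ^ γ) :
    Integrable G μ := by
  rw [← integrableOn_univ, ← union_compl_self (ball 0 r)]
  exact IntegrableOn.union
    (((integrableOn_ball_norm_rpow μ hβ r).const_mul a).mono' hG.restrict
      (ae_restrict_of_forall_mem measurableSet_ball hnear))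
    (((integrableOn_compl_ball_norm_rpow μ hγ hr).const_mul b).mono' hG.restrict
      (ae_restrict_of_forall_mem measurableSet_ball.compl hfar))

lemma norm_integral_le_of_norm_le_rpow_split [NormedSpace ℝ H] (hG : AEStronglyMeasurable G μ)
    (hβ : -(finrank ℝ E : ℝ) < β) (hγ : γ < -(finrank ℝ E : ℝ)) (hr : 0 < r)
    (hnear : ∀ x ∈ ball (0 : E) r, ‖G x‖ ≤ a * ‖x‖ ^ β)
    (hfar : ∀ x ∈ (ball (0 : E) r)ᶜ, ‖G x‖ ≤ b * ‖x‖ ^ γ) :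
    ‖∫ x, G x ∂μ‖ ≤ finrank ℝ E * μ.real (ball 0 1) *
      (a * r ^ ((finrank ℝ E : ℝ) + β) / (finrank ℝ E + β) +
        b * r ^ ((finrank ℝ E : ℝ) + γ) / (-(finrank ℝ E + γ))) := by
  have hGint := (integrable_of_norm_le_rpow_split hG hβ hγ hr hnear hfar).norm
  calc ‖∫ x, G x ∂μ‖ ≤ ∫ x, ‖G x‖ ∂μ := norm_integral_le_integral_norm _
    _ = (∫ x in ball 0 r, ‖G x‖ ∂μ) + ∫ x in (ball 0 r)ᶜ, ‖G x‖ ∂μ :=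
      (integral_add_compl measurableSet_ball hGint).symm
    _ ≤ (∫ x in ball 0 r, a * ‖x‖ ^ β ∂μ) + ∫ x in (ball 0 r)ᶜ, b * ‖x‖ ^ γ ∂μ :=
      add_le_add
        (setIntegral_mono_on hGint.integrableOn
          ((integrableOn_ball_norm_rpow μ hβ r).const_mul a) measurableSet_ball hnear)
        (setIntegral_mono_on hGint.integrableOn
          ((integrableOn_compl_ball_norm_rpow μ hγ hr).const_mul b) measurableSet_ball.compl hfar)
    _ = _ := by
      rw [integral_const_mul, integral_const_mul, setIntegral_ball_norm_rpow μ hβ hr.le,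
        setIntegral_compl_ball_norm_rpow μ hγ hr]
      ring

end RadialIntegral

section SecondDifference

variable {E F : Type*} [NormedAddCommGroup E] [NormedAddCommGroup F] {u : E → F} {K M α : ℝ}

lemma continuous_of_norm_sub_le_rpow (hα : 0 < α) (hu : ∀ x y, ‖u x - u y‖ ≤ K * ‖x - y‖ ^ α) :
    Continuous u := by
  refine continuous_iff_continuousAt.2 fun x => tendsto_iff_norm_sub_tendsto_zero.2 ?_
  have hlim : Filter.Tendsto (fun y => K * ‖y - x‖ ^ α) (nhds x) (nhds (K * ‖x - x‖ ^ α)) := by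
    have : Continuous fun y : E => ‖y - x‖ ^ α :=
      Continuous.rpow_const (by fun_prop) fun _ => Or.inr hα.le
    exact (continuous_const.mul this).tendsto x
  rw [sub_self, norm_zero, zero_rpow hα.ne', mul_zero] at hlim
  exact squeeze_zero (fun _ => norm_nonneg _) (fun y => hu y x) hlim

lemma nonneg_of_norm_sub_le_rpow [Nontrivial E] (hu : ∀ x y, ‖u x - u y‖ ≤ K * ‖x - y‖ ^ α) :
    0 ≤ K := by
  obtain ⟨x, hx⟩ := exists_ne (0 : E)
  have hpos : 0 < ‖x - 0‖ ^ α := rpow_pos_of_pos (by simpa using hx) α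
  exact nonneg_of_mul_nonneg_left ((norm_nonneg _).trans (hu x 0)) hpos

variable [NormedSpace ℝ F]

def secondDiff (u : E → F) (x h : E) : F := (2 : ℝ) • u x - u (x + h) - u (x - h)

lemma secondDiff_eq_add (u : E → F) (x h : E) :
    secondDiff u x h = (u x - u (x + h)) + (u x - u (x - h)) := by
  rw [secondDiff, two_smul]; abel

lemma norm_secondDiff_le_of_holder (hu : ∀ x y, ‖u x - u y‖ ≤ K * ‖x - y‖ ^ α) (x h : E) :
    ‖secondDiff u x h‖ ≤ 2 * K * ‖h‖ ^ α := by
  have h₁ := hu x (x + h)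
  have h₂ := hu x (x - h)
  rw [sub_add_cancel_left, norm_neg] at h₁
  rw [sub_sub_cancel] at h₂
  rw [secondDiff_eq_add]
  linarith [norm_add_le (u x - u (x + h)) (u x - u (x - h))]

lemma norm_secondDiff_le_of_bounded (hM : ∀ x, ‖u x‖ ≤ M) (x h : E) :
    ‖secondDiff u x h‖ ≤ 4 * M := by
  rw [secondDiff_eq_add]
  linarith [norm_add_le (u x - u (x + h)) (u x - u (x - h)), norm_sub_le (u x) (u (x + h)),
    norm_sub_le (u x) (u (x - h)), hM x, hM (x + h), hM (x - h)]

lemma norm_secondDiff_sub_le (hu : ∀ x y, ‖u x - u y‖ ≤ K * ‖x - y‖ ^ α) (x x' h : E) :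
    ‖secondDiff u x h - secondDiff u x' h‖ ≤ 4 * K * ‖x - x'‖ ^ α := by
  have h₁ := hu (x + h) (x' + h)
  have h₂ := hu (x - h) (x' - h)
  rw [add_sub_add_right_eq_sub] at h₁
  rw [sub_sub_sub_cancel_right] at h₂
  have hsplit : secondDiff u x h - secondDiff u x' h =
      (u x - u x') + (u x - u x') - (u (x + h) - u (x' + h)) - (u (x - h) - u (x' - h)) := by
    simp only [secondDiff, two_smul]; abel
  rw [hsplit]
  linarith [norm_sub_le ((u x - u x') + (u x - u x') - (u (x + h) - u (x' + h)))
      (u (x - h) - u (x' - h)),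
    norm_sub_le ((u x - u x') + (u x - u x')) (u (x + h) - u (x' + h)),
    norm_add_le (u x - u x') (u x - u x'), hu x x']

end SecondDifference

section SingularKernel

variable {E F G : Type*} [NormedAddCommGroup E] [NormedSpace ℝ E] [FiniteDimensional ℝ E]
  [MeasurableSpace E] [BorelSpace E] {μ : Measure E}
  [NormedAddCommGroup F] [NormedSpace ℝ F] [NormedAddCommGroup G] [NormedSpace ℝ G]
  {Φ : E → F →L[ℝ] G} {u : E → F} {σ α K M : ℝ}

lemma norm_apply_le_mul_rpow_sub {A : F →L[ℝ] G} {v : F} {t p c : ℝ} (ht : 0 ≤ t)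
    (hαp : α - p ≠ 0) (hA : ‖A‖ ≤ (t ^ p)⁻¹) (hv : ‖v‖ ≤ c * t ^ α) :
    ‖A v‖ ≤ c * t ^ (α - p) := by
  calc ‖A v‖ ≤ ‖A‖ * ‖v‖ := A.le_opNorm v
    _ ≤ (t ^ p)⁻¹ * (c * t ^ α) := mul_le_mul hA hv (norm_nonneg v) (by positivity)
    _ = c * t ^ (α - p) := by rw [rpow_sub' ht hαp, div_eq_mul_inv]; ring

lemma norm_apply_le_mul_rpow_neg {A : F →L[ℝ] G} {v : F} {t p c : ℝ} (ht : 0 ≤ t)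
    (hA : ‖A‖ ≤ (t ^ p)⁻¹) (hv : ‖v‖ ≤ c) : ‖A v‖ ≤ c * t ^ (-p) := by
  calc ‖A v‖ ≤ ‖A‖ * ‖v‖ := A.le_opNorm v
    _ ≤ (t ^ p)⁻¹ * c := mul_le_mul hA hv (norm_nonneg v) (by positivity)
    _ = c * t ^ (-p) := by rw [rpow_neg ht, mul_comm]

variable (μ) in
def secondDiffIntegral (Φ : E → F →L[ℝ] G) (u : E → F) (x : E) : G :=
  ∫ h, Φ h (secondDiff u x h) ∂μ

lemma aestronglyMeasurable_kernel_secondDiff (hΦm : AEStronglyMeasurable Φ μ)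
    (hu : Continuous u) (x : E) :
    AEStronglyMeasurable (fun h => Φ h (secondDiff u x h)) μ :=
  (ContinuousLinearMap.id ℝ (F →L[ℝ] G)).aestronglyMeasurable_comp₂ hΦm
    (by unfold secondDiff; fun_prop : Continuous fun h => secondDiff u x h).aestronglyMeasurable

variable [Nontrivial E] [μ.IsAddHaarMeasure]

lemma integrable_kernel_secondDiff (hΦm : AEStronglyMeasurable Φ μ)
    {n : ℕ} (hn : finrank ℝ E = n) (hΦ : ∀ h, ‖Φ h‖ ≤ (‖h‖ ^ ((n : ℝ) + σ))⁻¹)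
    (hσ : 0 < σ) (hσα : σ < α)
    (hα : α ≤ 1) (hM : ∀ x, ‖u x‖ ≤ M) (hu : ∀ x y, ‖u x - u y‖ ≤ K * ‖x - y‖ ^ α) (x : E) :
    Integrable (fun h => Φ h (secondDiff u x h)) μ := by
  subst hn
  have hn : (1 : ℝ) ≤ finrank ℝ E := by exact_mod_cast finrank_pos
  exact integrable_of_norm_le_rpow_split
    (aestronglyMeasurable_kernel_secondDiff hΦm (continuous_of_norm_sub_le_rpow (by linarith) hu) x)
    (by linarith) (by linarith) one_pos
    (fun h _ => norm_apply_le_mul_rpow_sub (norm_nonneg h) (by linarith) (hΦ h)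
      (norm_secondDiff_le_of_holder hu x h))
    (fun h _ => norm_apply_le_mul_rpow_neg (norm_nonneg h) (hΦ h)
      (norm_secondDiff_le_of_bounded hM x h))

lemma norm_secondDiffIntegral_sub_le (hΦm : AEStronglyMeasurable Φ μ)
    {n : ℕ} (hn : finrank ℝ E = n) (hΦ : ∀ h, ‖Φ h‖ ≤ (‖h‖ ^ ((n : ℝ) + σ))⁻¹)
    (hσ : 0 < σ) (hσα : σ < α)
    (hα : α ≤ 1) (hM : ∀ x, ‖u x‖ ≤ M) (hu : ∀ x y, ‖u x - u y‖ ≤ K * ‖x - y‖ ^ α) (x x' : E) :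
    ‖secondDiffIntegral μ Φ u x - secondDiffIntegral μ Φ u x'‖ ≤
      4 * n * μ.real (ball 0 1) * (1 / (α - σ) + 1 / σ) * K * ‖x - x'‖ ^ (α - σ) := by
  subst hn
  rcases eq_or_ne x x' with rfl | hxx'
  · simp [zero_rpow (sub_pos.2 hσα).ne']
  have hn : (1 : ℝ) ≤ finrank ℝ E := by exact_mod_cast finrank_pos
  have hr : 0 < ‖x - x'‖ := norm_pos_iff.2 (sub_ne_zero.2 hxx')
  have hmeas := aestronglyMeasurable_kernel_secondDiff hΦm
    (continuous_of_norm_sub_le_rpow (by linarith) hu)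
  have hint := integrable_kernel_secondDiff hΦm rfl hΦ hσ hσα hα hM hu
  rw [secondDiffIntegral, secondDiffIntegral, ← integral_sub (hint x) (hint x')]
  refine (norm_integral_le_of_norm_le_rpow_split
    (G := fun h => Φ h (secondDiff u x h) - Φ h (secondDiff u x' h)) ((hmeas x).sub (hmeas x'))
    (a := 4 * K) (b := 4 * K * ‖x - x'‖ ^ α) (β := α - (finrank ℝ E + σ))
    (γ := -(finrank ℝ E + σ)) (by linarith) (by linarith) hr
    (fun h _ => ?_) (fun h _ => ?_)).trans_eq ?_
  · have hnear (y : E) : ‖Φ h (secondDiff u y h)‖ ≤ 2 * K * ‖h‖ ^ (α - (finrank ℝ E + σ)) :=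
      norm_apply_le_mul_rpow_sub (norm_nonneg h) (by linarith) (hΦ h)
        (norm_secondDiff_le_of_holder hu y h)
    linarith [norm_sub_le (Φ h (secondDiff u x h)) (Φ h (secondDiff u x' h)), hnear x, hnear x']
  · simp only [← map_sub]
    exact norm_apply_le_mul_rpow_neg (norm_nonneg h) (hΦ h) (norm_secondDiff_sub_le hu x x' h)
  · have hsplit : ‖x - x'‖ ^ (α - σ) = ‖x - x'‖ ^ α * ‖x - x'‖ ^ (-σ) := by
      rw [rpow_sub hr, rpow_neg hr.le, div_eq_mul_inv]
    rw [show (finrank ℝ E : ℝ) + (α - (finrank ℝ E + σ)) = α - σ by ring,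
      show (finrank ℝ E : ℝ) + -(finrank ℝ E + σ) = -σ by ring, hsplit]
    field_simp

end SingularKernel

section ScalarKernel

variable {E F : Type*} [NormedAddCommGroup E] [NormedAddCommGroup F] [NormedSpace ℝ F]

def scalarKernel (p : ℝ) (h : E) : F →L[ℝ] F := (‖h‖ ^ p)⁻¹ • ContinuousLinearMap.id ℝ F

lemma norm_scalarKernel_le (p : ℝ) (h : E) : ‖scalarKernel (F := F) p h‖ ≤ (‖h‖ ^ p)⁻¹ := by
  rw [scalarKernel, norm_smul, norm_inv, norm_of_nonneg (by positivity)]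
  exact mul_le_of_le_one_right (by positivity) ContinuousLinearMap.norm_id_le

lemma aestronglyMeasurable_scalarKernel [MeasurableSpace E] [OpensMeasurableSpace E]
    (μ : Measure E) (p : ℝ) : AEStronglyMeasurable (scalarKernel (F := F) p) μ :=
  (measurable_norm.pow_const p).inv.aestronglyMeasurable.smul aestronglyMeasurable_const

end ScalarKernel

section DyadicKernel

variable {E : Type*} [NormedAddCommGroup E] [InnerProductSpace ℝ E]

def dyadicKernel (p : ℝ) (h : E) : E →L[ℝ] E :=
  (‖h‖ ^ 2 * ‖h‖ ^ p)⁻¹ • (innerSL ℝ h).smulRight h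

lemma dyadicKernel_apply (p : ℝ) (h v : E) :
    dyadicKernel p h v = (⟪h, v⟫ / (‖h‖ ^ 2 * ‖h‖ ^ p)) • h := by
  simp [dyadicKernel, smul_smul, div_eq_inv_mul]

lemma norm_dyadicKernel_le (p : ℝ) (h : E) : ‖dyadicKernel p h‖ ≤ (‖h‖ ^ p)⁻¹ := by
  rw [dyadicKernel, norm_smul, ContinuousLinearMap.norm_smulRight_apply, innerSL_apply_norm,
    norm_inv, norm_of_nonneg (by positivity)]
  rcases eq_or_ne ‖h‖ 0 with h0 | h0
  · simp [h0, rpow_nonneg]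
  · exact le_of_eq (by field_simp)

lemma aestronglyMeasurable_dyadicKernel [MeasurableSpace E] [BorelSpace E]
    [SecondCountableTopology E] (μ : Measure E) (p : ℝ) :
    AEStronglyMeasurable (dyadicKernel (E := E) p) μ :=
  ((measurable_norm.pow_const 2).mul (measurable_norm.pow_const p)).inv.aestronglyMeasurable.smul
    (by fun_prop : Continuous fun h : E => (innerSL ℝ h).smulRight h).aestronglyMeasurable

end DyadicKernel

lemma lameFracFn_eq (d : ℕ) (s μ lam : ℝ)
    (u : EuclideanSpace ℝ (Fin d) → EuclideanSpace ℝ (Fin d)) (x : EuclideanSpace ℝ (Fin d)) :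
    lameFracFn d s μ lam u x =
      (((2 * s + 1) * μ ^ s - (2 * μ + lam) ^ s) / (2 * s) * (cConst d s / 2)) •
          secondDiffIntegral volume (scalarKernel ((d : ℝ) + 2 * s)) u x +
        (((2 * μ + lam) ^ s - μ ^ s) / (2 * s) * (kappaConst d s / 2)) •
          secondDiffIntegral volume (dyadicKernel ((d : ℝ) + 2 * s)) u x := by
  simp only [lameFracFn, secondDiffIntegral, dyadicKernel_apply]
  rfl

lemma norm_smul_add_smul_sub_le {F : Type*} [NormedAddCommGroup F] [NormedSpace ℝ F]
    (a b : ℝ) {y₁ y₂ z₁ z₂ : F} {c : ℝ} (h₁ : ‖y₁ - z₁‖ ≤ c) (h₂ : ‖y₂ - z₂‖ ≤ c) :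
    ‖(a • y₁ + b • y₂) - (a • z₁ + b • z₂)‖ ≤ (|a| + |b|) * c := by
  calc ‖(a • y₁ + b • y₂) - (a • z₁ + b • z₂)‖ = ‖a • (y₁ - z₁) + b • (y₂ - z₂)‖ := by
        rw [smul_sub, smul_sub]; abel_nf
    _ ≤ |a| * ‖y₁ - z₁‖ + |b| * ‖y₂ - z₂‖ := by
      simpa only [norm_smul, Real.norm_eq_abs] using norm_add_le (a • (y₁ - z₁)) (b • (y₂ - z₂))
    _ ≤ (|a| + |b|) * c := by rw [add_mul]; gcongr

theorem lameFrac_holder_mapping_general (d : ℕ) (hd : 2 ≤ d) (s : ℝ) (hs : s ∈ Set.Ioo (0 : ℝ) 1)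
    (μ lam : ℝ)
    (α : ℝ) (hα : α ∈ Set.Ioc (2 * s) 1) :
    ∃ C : ℝ, 0 < C ∧
      ∀ (u : EuclideanSpace ℝ (Fin d) → EuclideanSpace ℝ (Fin d)) (K M : ℝ),
        (∀ x, ‖u x‖ ≤ M) →
        (∀ x y, ‖u x - u y‖ ≤ K * ‖x - y‖ ^ α) →
        (∀ x : EuclideanSpace ℝ (Fin d),
          Integrable (fun h : EuclideanSpace ℝ (Fin d) =>
            (‖h‖ ^ ((d : ℝ) + 2 * s))⁻¹ • ((2 : ℝ) • u x - u (x + h) - u (x - h))) ∧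
          Integrable (fun h : EuclideanSpace ℝ (Fin d) =>
            (⟪h, (2 : ℝ) • u x - u (x + h) - u (x - h)⟫ /
              (‖h‖ ^ 2 * ‖h‖ ^ ((d : ℝ) + 2 * s))) • h)) ∧
        ∀ x x' : EuclideanSpace ℝ (Fin d),
          ‖lameFracFn d s μ lam u x - lameFracFn d s μ lam u x'‖ ≤
            C * K * ‖x - x'‖ ^ (α - 2 * s) := by
  obtain ⟨h2sα, hα1⟩ := hα
  have hσ : 0 < 2 * s := by linarith [hs.1]
  have : Nonempty (Fin d) := ⟨⟨0, by omega⟩⟩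
  set a := ((2 * s + 1) * μ ^ s - (2 * μ + lam) ^ s) / (2 * s) * (cConst d s / 2)
  set b := ((2 * μ + lam) ^ s - μ ^ s) / (2 * s) * (kappaConst d s / 2)
  set C₀ := 4 * d * (volume : Measure (EuclideanSpace ℝ (Fin d))).real (ball 0 1) *
    (1 / (α - 2 * s) + 1 / (2 * s))
  have hC₀ : 0 ≤ C₀ := by have := sub_pos.2 h2sα; positivity
  refine ⟨(|a| + |b|) * C₀ + 1, by positivity, fun u K M hM hu => ⟨fun x => ⟨?_, ?_⟩, fun x x' => ?_⟩⟩
  · exact integrable_kernel_secondDiff (aestronglyMeasurable_scalarKernel _ _)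
      finrank_euclideanSpace_fin (norm_scalarKernel_le _) hσ h2sα hα1 hM hu x
  · simpa only [dyadicKernel_apply, secondDiff] using integrable_kernel_secondDiff
      (aestronglyMeasurable_dyadicKernel _ _) finrank_euclideanSpace_fin (norm_dyadicKernel_le _)
      hσ h2sα hα1 hM hu x
  have hK : 0 ≤ K := nonneg_of_norm_sub_le_rpow hu
  have hr : 0 ≤ ‖x - x'‖ ^ (α - 2 * s) := by positivity
  rw [lameFracFn_eq, lameFracFn_eq]
  refine (norm_smul_add_smul_sub_le a b
    (norm_secondDiffIntegral_sub_le (aestronglyMeasurable_scalarKernel _ _)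
      finrank_euclideanSpace_fin (norm_scalarKernel_le _) hσ h2sα hα1 hM hu x x')
    (norm_secondDiffIntegral_sub_le (aestronglyMeasurable_dyadicKernel _ _)
      finrank_euclideanSpace_fin (norm_dyadicKernel_le _) hσ h2sα hα1 hM hu x x')).trans ?_
  nlinarith [mul_nonneg hK hr]

/-- If `u` is bounded and `α`-Hölder with `α ∈ (2s,1]`, then `𝕃^s u` is well defined by
absolutely convergent integrals and is `(α−2s)`-Hölder, with constant `C K` where `C`
depends only on `d, s, α, μ, λ`. -/
theorem lameFrac_holder_mapping (d : ℕ) (hd : 2 ≤ d) (s : ℝ) (hs : s ∈ Set.Ioo (0 : ℝ) 1)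
    (μ lam : ℝ) (hμ : 0 < μ) (hlam : 0 < 2 * μ + lam)
    (α : ℝ) (hα : α ∈ Set.Ioc (2 * s) 1) :
    ∃ C : ℝ, 0 < C ∧
      ∀ (u : EuclideanSpace ℝ (Fin d) → EuclideanSpace ℝ (Fin d)) (K M : ℝ),
        (∀ x, ‖u x‖ ≤ M) →
        (∀ x y, ‖u x - u y‖ ≤ K * ‖x - y‖ ^ α) →
        (∀ x : EuclideanSpace ℝ (Fin d),
          Integrable (fun h : EuclideanSpace ℝ (Fin d) =>
            (‖h‖ ^ ((d : ℝ) + 2 * s))⁻¹ • ((2 : ℝ) • u x - u (x + h) - u (x - h))) ∧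
          Integrable (fun h : EuclideanSpace ℝ (Fin d) =>
            (⟪h, (2 : ℝ) • u x - u (x + h) - u (x - h)⟫ /
              (‖h‖ ^ 2 * ‖h‖ ^ ((d : ℝ) + 2 * s))) • h)) ∧
        ∀ x x' : EuclideanSpace ℝ (Fin d),
          ‖lameFracFn d s μ lam u x - lameFracFn d s μ lam u x'‖ ≤
            C * K * ‖x - x'‖ ^ (α - 2 * s) :=
  lameFrac_holder_mapping_general d hd s hs μ lam α hα
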